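/- arXiv:1503.00266 — 2 statements merged into one kernel-verified Lean document; each statement's English description precedes it below -/
import Mathlib

section
/- Let G : E → (0,∞) satisfy sup_{x,y∈E} G(x)/G(y) ≤ δ for some δ ∈ [1,∞). Define Φ(μ)(φ) = μ(G·φ)/μ(G) for probability measures μ on E. Then for any two probability measures μ, ρ on E, ‖Φ(μ) − Φ(ρ)‖_tv ≤ δ · ‖μ − ρ‖_tv. -/
open MeasureTheory ProbabilityTheory
open scoped ENNReal NNReal

/-- Total variation distance between two (possibly non-σ-additive-normalized) measures,
as the supremum over measurable sets of the absolute difference of their masses. -/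
noncomputable def tvDist {E : Type*} [MeasurableSpace E] (μ ρ : Measure E) : ℝ :=
  ⨆ A : {s : Set E // MeasurableSet s}, |(μ A).toReal - (ρ A).toReal|

/-- The Boltzmann–Gibbs update `Φ(μ)(A) = μ(G·1_A)/μ(G)` as a measure. -/
noncomputable def boltzmannGibbs {E : Type*} [MeasurableSpace E] (G : E → ℝ)
    (μ : Measure E) : Measure E :=
  (∫⁻ x, ENNReal.ofReal (G x) ∂μ)⁻¹ • μ.withDensity (fun x => ENNReal.ofReal (G x))

lemma BG.abs_le_tvDist {E : Type*} [MeasurableSpace E] (μ ρ : Measure E)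
    [IsProbabilityMeasure μ] [IsProbabilityMeasure ρ] (T : Set E) (hT : MeasurableSet T) :
    |(μ T).toReal - (ρ T).toReal| ≤ tvDist μ ρ := by
  have hbdd : BddAbove (Set.range fun A : {s : Set E // MeasurableSet s} =>
      |(μ A).toReal - (ρ A).toReal|) := by
    refine ⟨1, ?_⟩
    rintro x ⟨A, rfl⟩
    have h1 : (μ A.1).toReal ≤ 1 := by
      have := ENNReal.toReal_mono ENNReal.one_ne_top (prob_le_one : μ A.1 ≤ 1)
      simpa using this
    have h2 : (ρ A.1).toReal ≤ 1 := by
      have := ENNReal.toReal_mono ENNReal.one_ne_top (prob_le_one : ρ A.1 ≤ 1)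
      simpa using this
    have h3 : (0 : ℝ) ≤ (μ A.1).toReal := ENNReal.toReal_nonneg
    have h4 : (0 : ℝ) ≤ (ρ A.1).toReal := ENNReal.toReal_nonneg
    show |(μ A.1).toReal - (ρ A.1).toReal| ≤ 1
    rw [abs_le]
    constructor <;> linarith
  exact le_ciSup hbdd ⟨T, hT⟩

lemma BG.key_real {E : Type*} [MeasurableSpace E] (g : E → ℝ≥0∞)
    (K : ℝ) (hK0 : 0 ≤ K) (hK : ∀ x, g x ≤ ENNReal.ofReal K)
    (μ ρ : Measure E) [IsFiniteMeasure μ] [IsFiniteMeasure ρ]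
    (T : Set E) (hle : ρ.restrict T ≤ μ.restrict T) :
    (∫⁻ x in T, g x ∂μ).toReal - (∫⁻ x in T, g x ∂ρ).toReal ≤
      K * ((μ T).toReal - (ρ T).toReal) := by
  set ν : Measure E := μ.restrict T - ρ.restrict T with hν
  have h1 : ν + ρ.restrict T = μ.restrict T := Measure.sub_add_cancel_of_le hle
  have h2 : ∫⁻ x, g x ∂(μ.restrict T) = ∫⁻ x, g x ∂ν + ∫⁻ x, g x ∂(ρ.restrict T) := by
    rw [← h1, lintegral_add_measure]
  have h3 : ∫⁻ x, g x ∂ν ≤ ENNReal.ofReal K * ν Set.univ := by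
    calc ∫⁻ x, g x ∂ν ≤ ∫⁻ _, ENNReal.ofReal K ∂ν := lintegral_mono hK
      _ = ENNReal.ofReal K * ν Set.univ := by rw [lintegral_const]
  have h4 : ν Set.univ = μ T - ρ T := by
    rw [hν, Measure.sub_apply MeasurableSet.univ hle, Measure.restrict_apply_univ,
      Measure.restrict_apply_univ]
  have hρμ : ρ T ≤ μ T := by
    have := Measure.le_iff.1 hle Set.univ MeasurableSet.univ
    simpa [Measure.restrict_apply_univ] using this
  have hνfin : ∫⁻ x, g x ∂ν ≠ ⊤ := by
    refine ne_top_of_le_ne_top (ENNReal.mul_ne_top ENNReal.ofReal_ne_top ?_) h3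
    rw [h4]
    exact ne_top_of_le_ne_top (measure_ne_top μ T) tsub_le_self
  have hρfin : ∫⁻ x, g x ∂(ρ.restrict T) ≠ ⊤ := by
    refine ne_top_of_le_ne_top ?_ (lintegral_mono hK)
    rw [lintegral_const]
    exact ENNReal.mul_ne_top ENNReal.ofReal_ne_top (measure_ne_top _ _)
  have h5 : (∫⁻ x in T, g x ∂μ).toReal =
      (∫⁻ x, g x ∂ν).toReal + (∫⁻ x in T, g x ∂ρ).toReal := by
    rw [h2, ENNReal.toReal_add hνfin hρfin]
  have h6 : (∫⁻ x, g x ∂ν).toReal ≤ K * ((μ T).toReal - (ρ T).toReal) := by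
    have := ENNReal.toReal_mono
      (ENNReal.mul_ne_top ENNReal.ofReal_ne_top
        (by rw [h4]; exact ne_top_of_le_ne_top (measure_ne_top μ T) tsub_le_self)) h3
    calc (∫⁻ x, g x ∂ν).toReal ≤ (ENNReal.ofReal K * ν Set.univ).toReal := this
      _ = K * ((μ T).toReal - (ρ T).toReal) := by
          rw [h4, ENNReal.toReal_mul, ENNReal.toReal_ofReal hK0,
            ENNReal.toReal_sub_of_le hρμ (measure_ne_top μ T)]
  linarith

set_option maxHeartbeats 1600000 in
/-- If `sup_{x,y} G(x)/G(y) ≤ δ`, the Boltzmann–Gibbs update is δ-Lipschitz in total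
variation: `‖Φ(μ) − Φ(ρ)‖_tv ≤ δ·‖μ − ρ‖_tv`. -/
theorem boltzmannGibbs_tv_lipschitz
    {E : Type*} [MeasurableSpace E]
    (G : E → ℝ) (hGm : Measurable G) (hGpos : ∀ x, 0 < G x) (hGb : ∃ C : ℝ, ∀ x, G x ≤ C)
    (δ : ℝ) (hδ : 1 ≤ δ) (hratio : ∀ x y, G x ≤ δ * G y)
    (μ ρ : Measure E) [IsProbabilityMeasure μ] [IsProbabilityMeasure ρ] :
    tvDist (boltzmannGibbs G μ) (boltzmannGibbs G ρ) ≤ δ * tvDist μ ρ := by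
  obtain ⟨C, hC⟩ := hGb
  have hE : Nonempty E := by
    by_contra h
    rw [not_nonempty_iff] at h
    have h1 : μ Set.univ = 1 := measure_univ
    rw [Set.univ_eq_empty_iff.2 h, measure_empty] at h1
    exact one_ne_zero h1.symm
  obtain ⟨x₀⟩ := hE
  set g : E → ℝ≥0∞ := fun x => ENNReal.ofReal (G x) with hgdef
  have hgm : Measurable g := hGm.ennreal_ofReal
  have hδ0 : (0:ℝ) < δ := lt_of_lt_of_le one_pos hδ
  have hgC : ∀ x, g x ≤ ENNReal.ofReal C := fun x => ENNReal.ofReal_le_ofReal (hC x)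
  -- finiteness of all set integrals
  have hfin : ∀ (ν : Measure E) [IsProbabilityMeasure ν] (T : Set E),
      ∫⁻ x in T, g x ∂ν ≠ ⊤ := by
    intro ν hν T
    refine ne_top_of_le_ne_top ?_ (lintegral_mono hgC)
    rw [lintegral_const]
    exact ENNReal.mul_ne_top ENNReal.ofReal_ne_top (measure_ne_top _ _)
  -- positivity of total masses
  have hlow : ∀ x, ENNReal.ofReal (G x₀ / δ) ≤ g x := by
    intro x
    exact ENNReal.ofReal_le_ofReal (by rw [div_le_iff₀ hδ0]; linarith [hratio x₀ x])
  have hpos : ∀ (ν : Measure E) [IsProbabilityMeasure ν], ∫⁻ x, g x ∂ν ≠ 0 := by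
    intro ν hν
    have h1 : ENNReal.ofReal (G x₀ / δ) ≤ ∫⁻ x, g x ∂ν := by
      calc ENNReal.ofReal (G x₀ / δ) = ∫⁻ _, ENNReal.ofReal (G x₀ / δ) ∂ν := by
            rw [lintegral_const, measure_univ, mul_one]
        _ ≤ ∫⁻ x, g x ∂ν := lintegral_mono hlow
    intro h0
    rw [h0, le_zero_iff] at h1
    have : (0:ℝ) < G x₀ / δ := div_pos (hGpos x₀) hδ0
    exact (ENNReal.ofReal_pos.2 this).ne' h1
  have hμfin : ∫⁻ x, g x ∂μ ≠ ⊤ := by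
    have := hfin μ Set.univ; rwa [Measure.restrict_univ] at this
  have hρfin : ∫⁻ x, g x ∂ρ ≠ ⊤ := by
    have := hfin ρ Set.univ; rwa [Measure.restrict_univ] at this
  set b : ℝ := (∫⁻ x, g x ∂μ).toReal with hbdef
  set b' : ℝ := (∫⁻ x, g x ∂ρ).toReal with hb'def
  have hb : 0 < b := ENNReal.toReal_pos (hpos μ) hμfin
  have hb' : 0 < b' := ENNReal.toReal_pos (hpos ρ) hρfin
  -- the uniform bound K on g
  set K : ℝ := δ * b with hKdef
  have hK0 : 0 ≤ K := mul_nonneg hδ0.le hb.le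
  have hKb : ∀ x, g x ≤ ENNReal.ofReal K := by
    intro x
    have h1 : ENNReal.ofReal (G x) ≤ ENNReal.ofReal δ * ∫⁻ y, g y ∂μ := by
      calc ENNReal.ofReal (G x) = ∫⁻ _, ENNReal.ofReal (G x) ∂μ := by
            rw [lintegral_const, measure_univ, mul_one]
        _ ≤ ∫⁻ y, ENNReal.ofReal δ * g y ∂μ := by
            refine lintegral_mono fun y => ?_
            rw [hgdef, ← ENNReal.ofReal_mul hδ0.le]
            exact ENNReal.ofReal_le_ofReal (hratio x y)
        _ = ENNReal.ofReal δ * ∫⁻ y, g y ∂μ := lintegral_const_mul _ hgm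
    have h2 : ENNReal.ofReal δ * ∫⁻ y, g y ∂μ = ENNReal.ofReal K := by
      rw [hKdef, hbdef, ENNReal.ofReal_mul hδ0.le,
        ENNReal.ofReal_toReal hμfin]
    rw [hgdef]
    simpa [h2] using h1
  -- Hahn decomposition
  obtain ⟨s, hs, hs1, hs2⟩ := hahn_decomposition (μ := μ) (ν := ρ)
  -- restricted comparison on subsets of s resp. sᶜ
  have hres1 : ∀ T : Set E, MeasurableSet T → T ⊆ s → ρ.restrict T ≤ μ.restrict T := by
    intro T hT hTs
    refine Measure.le_iff.2 fun U hU => ?_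
    rw [Measure.restrict_apply hU, Measure.restrict_apply hU]
    exact hs1 (U ∩ T) (hU.inter hT) ((Set.inter_subset_right).trans hTs)
  have hres2 : ∀ T : Set E, MeasurableSet T → T ⊆ sᶜ → μ.restrict T ≤ ρ.restrict T := by
    intro T hT hTs
    refine Measure.le_iff.2 fun U hU => ?_
    rw [Measure.restrict_apply hU, Measure.restrict_apply hU]
    exact hs2 (U ∩ T) (hU.inter hT) ((Set.inter_subset_right).trans hTs)
  set tv : ℝ := tvDist μ ρ with htvdef
  have htv0 : 0 ≤ tv := by
    have := BG.abs_le_tvDist μ ρ ∅ MeasurableSet.empty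
    simpa using this
  -- splitting of set integrals along s
  have split : ∀ (ν : Measure E) [IsProbabilityMeasure ν], ∀ T : Set E, MeasurableSet T →
      (∫⁻ x in T, g x ∂ν).toReal =
        (∫⁻ x in T ∩ s, g x ∂ν).toReal + (∫⁻ x in T ∩ sᶜ, g x ∂ν).toReal := by
    intro ν hν T hT
    have h1 : ∫⁻ x in s, g x ∂(ν.restrict T) + ∫⁻ x in sᶜ, g x ∂(ν.restrict T)
        = ∫⁻ x, g x ∂(ν.restrict T) := lintegral_add_compl g hs
    rw [Measure.restrict_restrict hs, Measure.restrict_restrict hs.compl] at h1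
    rw [Set.inter_comm s T, Set.inter_comm sᶜ T] at h1
    rw [← h1, ENNReal.toReal_add (hfin ν _) (hfin ν _)]
  -- main estimate for a fixed measurable set A
  haveI : Nonempty {t : Set E // MeasurableSet t} := ⟨⟨∅, MeasurableSet.empty⟩⟩
  refine ciSup_le ?_
  rintro ⟨A, hA⟩
  -- values of the Boltzmann-Gibbs measures
  set a : ℝ := (∫⁻ x in A, g x ∂μ).toReal with hadef
  set a' : ℝ := (∫⁻ x in A, g x ∂ρ).toReal with ha'def
  have hΦμ : (boltzmannGibbs G μ A).toReal = a / b := by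
    rw [boltzmannGibbs, Measure.smul_apply, smul_eq_mul, withDensity_apply _ hA,
      ENNReal.toReal_mul, ENNReal.toReal_inv]
    rw [hadef, hbdef, hgdef]
    ring
  have hΦρ : (boltzmannGibbs G ρ A).toReal = a' / b' := by
    rw [boltzmannGibbs, Measure.smul_apply, smul_eq_mul, withDensity_apply _ hA,
      ENNReal.toReal_mul, ENNReal.toReal_inv]
    rw [ha'def, hb'def, hgdef]
    ring
  -- the eight pieces
  set p₁ : ℝ := (∫⁻ x in A ∩ s, g x ∂μ).toReal - (∫⁻ x in A ∩ s, g x ∂ρ).toReal with hp₁def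
  set n₁ : ℝ := (∫⁻ x in A ∩ sᶜ, g x ∂ρ).toReal - (∫⁻ x in A ∩ sᶜ, g x ∂μ).toReal with hn₁def
  set p₂ : ℝ := (∫⁻ x in Aᶜ ∩ s, g x ∂μ).toReal - (∫⁻ x in Aᶜ ∩ s, g x ∂ρ).toReal with hp₂def
  set n₂ : ℝ := (∫⁻ x in Aᶜ ∩ sᶜ, g x ∂ρ).toReal - (∫⁻ x in Aᶜ ∩ sᶜ, g x ∂μ).toReal with hn₂def
  have habs : ∀ T : Set E, MeasurableSet T → (μ T).toReal - (ρ T).toReal ≤ tv ∧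
      (ρ T).toReal - (μ T).toReal ≤ tv := by
    intro T hT
    have := BG.abs_le_tvDist μ ρ T hT
    rw [abs_le] at this
    exact ⟨this.2, by linarith [this.1]⟩
  -- bounds on the pieces
  have hp₁ : 0 ≤ p₁ ∧ p₁ ≤ K * tv := by
    have hle := hres1 (A ∩ s) (hA.inter hs) Set.inter_subset_right
    constructor
    · have := ENNReal.toReal_mono (hfin μ (A ∩ s)) (lintegral_mono' hle le_rfl)
      rw [hp₁def]; linarith
    · have h1 := BG.key_real g K hK0 hKb μ ρ (A ∩ s) hle
      have h2 := (habs (A ∩ s) (hA.inter hs)).1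
      rw [hp₁def]
      calc _ ≤ K * ((μ (A ∩ s)).toReal - (ρ (A ∩ s)).toReal) := h1
        _ ≤ K * tv := mul_le_mul_of_nonneg_left h2 hK0
  have hn₁ : 0 ≤ n₁ ∧ n₁ ≤ K * tv := by
    have hle := hres2 (A ∩ sᶜ) (hA.inter hs.compl) Set.inter_subset_right
    constructor
    · have := ENNReal.toReal_mono (hfin ρ (A ∩ sᶜ)) (lintegral_mono' hle le_rfl)
      rw [hn₁def]; linarith
    · have h1 := BG.key_real g K hK0 hKb ρ μ (A ∩ sᶜ) hle
      have h2 := (habs (A ∩ sᶜ) (hA.inter hs.compl)).2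
      rw [hn₁def]
      calc _ ≤ K * ((ρ (A ∩ sᶜ)).toReal - (μ (A ∩ sᶜ)).toReal) := h1
        _ ≤ K * tv := mul_le_mul_of_nonneg_left h2 hK0
  have hp₂ : 0 ≤ p₂ ∧ p₂ ≤ K * tv := by
    have hle := hres1 (Aᶜ ∩ s) (hA.compl.inter hs) Set.inter_subset_right
    constructor
    · have := ENNReal.toReal_mono (hfin μ (Aᶜ ∩ s)) (lintegral_mono' hle le_rfl)
      rw [hp₂def]; linarith
    · have h1 := BG.key_real g K hK0 hKb μ ρ (Aᶜ ∩ s) hle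
      have h2 := (habs (Aᶜ ∩ s) (hA.compl.inter hs)).1
      rw [hp₂def]
      calc _ ≤ K * ((μ (Aᶜ ∩ s)).toReal - (ρ (Aᶜ ∩ s)).toReal) := h1
        _ ≤ K * tv := mul_le_mul_of_nonneg_left h2 hK0
  have hn₂ : 0 ≤ n₂ ∧ n₂ ≤ K * tv := by
    have hle := hres2 (Aᶜ ∩ sᶜ) (hA.compl.inter hs.compl) Set.inter_subset_right
    constructor
    · have := ENNReal.toReal_mono (hfin ρ (Aᶜ ∩ sᶜ)) (lintegral_mono' hle le_rfl)
      rw [hn₂def]; linarith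
    · have h1 := BG.key_real g K hK0 hKb ρ μ (Aᶜ ∩ sᶜ) hle
      have h2 := (habs (Aᶜ ∩ sᶜ) (hA.compl.inter hs.compl)).2
      rw [hn₂def]
      calc _ ≤ K * ((ρ (Aᶜ ∩ sᶜ)).toReal - (μ (Aᶜ ∩ sᶜ)).toReal) := h1
        _ ≤ K * tv := mul_le_mul_of_nonneg_left h2 hK0
  -- splitting identities
  have hsplitA : a - a' = p₁ - n₁ := by
    rw [hadef, ha'def, split μ A hA, split ρ A hA, hp₁def, hn₁def]; ring
  have hsplitAc : ((∫⁻ x in Aᶜ, g x ∂μ).toReal - (∫⁻ x in Aᶜ, g x ∂ρ).toReal) = p₂ - n₂ := by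
    rw [split μ Aᶜ hA.compl, split ρ Aᶜ hA.compl, hp₂def, hn₂def]; ring
  have hbsplit : b = a + (∫⁻ x in Aᶜ, g x ∂μ).toReal := by
    have h1 : ∫⁻ x in A, g x ∂μ + ∫⁻ x in Aᶜ, g x ∂μ = ∫⁻ x, g x ∂μ := lintegral_add_compl g hA
    rw [hbdef, ← h1, ENNReal.toReal_add (hfin μ _) (hfin μ _), hadef]
  have hb'split : b' = a' + (∫⁻ x in Aᶜ, g x ∂ρ).toReal := by
    have h1 : ∫⁻ x in A, g x ∂ρ + ∫⁻ x in Aᶜ, g x ∂ρ = ∫⁻ x, g x ∂ρ := lintegral_add_compl g hA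
    rw [hb'def, ← h1, ENNReal.toReal_add (hfin ρ _) (hfin ρ _), ha'def]
  have hbb' : b - b' = (p₁ - n₁) + (p₂ - n₂) := by
    rw [hbsplit, hb'split, ← hsplitAc, ← hsplitA]; ring
  -- 0 ≤ a' ≤ b'
  have ha'0 : 0 ≤ a' := ENNReal.toReal_nonneg
  have ha'b' : a' ≤ b' := by
    have h0 : (0:ℝ) ≤ (∫⁻ x in Aᶜ, g x ∂ρ).toReal := ENNReal.toReal_nonneg
    rw [hb'split]; linarith
  set c : ℝ := a' / b' with hcdef
  have hc0 : 0 ≤ c := div_nonneg ha'0 hb'.le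
  have hc1 : c ≤ 1 := by rw [hcdef, div_le_one hb']; exact ha'b'
  -- the numerator bound
  set num : ℝ := (a - a') - c * (b - b') with hnumdef
  have hnum_eq : num = (1 - c) * p₁ - (1 - c) * n₁ - c * p₂ + c * n₂ := by
    rw [hnumdef, hsplitA, hbb']; ring
  have h1c : 0 ≤ 1 - c := by linarith
  have hub : num ≤ K * tv := by
    have e1 : (1 - c) * p₁ ≤ (1 - c) * (K * tv) := mul_le_mul_of_nonneg_left hp₁.2 h1c
    have e2 : c * n₂ ≤ c * (K * tv) := mul_le_mul_of_nonneg_left hn₂.2 hc0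
    have e3 : 0 ≤ (1 - c) * n₁ := mul_nonneg h1c hn₁.1
    have e4 : 0 ≤ c * p₂ := mul_nonneg hc0 hp₂.1
    nlinarith [hnum_eq]
  have hlb : -(K * tv) ≤ num := by
    have e1 : (1 - c) * n₁ ≤ (1 - c) * (K * tv) := mul_le_mul_of_nonneg_left hn₁.2 h1c
    have e2 : c * p₂ ≤ c * (K * tv) := mul_le_mul_of_nonneg_left hp₂.2 hc0
    have e3 : 0 ≤ (1 - c) * p₁ := mul_nonneg h1c hp₁.1
    have e4 : 0 ≤ c * n₂ := mul_nonneg hc0 hn₂.1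
    nlinarith [hnum_eq]
  -- putting it together
  have hdiff : a / b - a' / b' = num / b := by
    rw [hnumdef, hcdef]
    field_simp
    ring
  rw [hΦμ, hΦρ, hdiff, abs_div, abs_of_pos hb]
  have h1 : |num| ≤ K * tv := abs_le.2 ⟨hlb, hub⟩
  calc |num| / b ≤ (K * tv) / b := by gcongr
    _ = δ * tv := by rw [hKdef]; field_simp
end

section
/- If P₁ is a Markov kernel from E₀ to E₁ with Dobrushin coefficient β(P₁) ≤ 1−ε₁ and P₂ is a Markov kernel from E₁ to E₂ with β(P₂) ≤ 1−ε₂, then the composition P₁P₂ satisfies β(P₁P₂) ≤ β(P₁)·β(P₂) ≤ (1−ε₁)(1−ε₂). In particular, composing n kernels each with Dobrushin coefficient at most 1−ε gives a coefficient at most (1−ε)ⁿ. -/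
/-! If `f` is measurable with values in an interval of length `β`, a Hahn decomposition `S` of
`μ - ν` gives `∫ f dμ - ∫ f dν ≤ β (μ S - ν S) ≤ β ‖μ - ν‖_tv`. For `f = P₂(·, A)` the interval
length is `β(P₂)`, and `μ = P₁(x, ·)`, `ν = P₁(y, ·)` then give `β(P₁P₂) ≤ β(P₁) β(P₂)`; the
bound for iterates follows by induction. -/

open MeasureTheory ProbabilityTheory

/-- Dobrushin contraction coefficient of a kernel. -/
noncomputable def dobrushin {E F : Type*} [MeasurableSpace E] [MeasurableSpace F]
    (P : Kernel E F) : ℝ :=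
  ⨆ p : E × E, tvDist (P p.1) (P p.2)

/-- `n`-fold composition of a kernel with itself. -/
noncomputable def iterKernel {E : Type*} [MeasurableSpace E] (P : Kernel E E) :
    ℕ → Kernel E E
  | 0 => Kernel.id
  | n + 1 => (iterKernel P n).comp P

section TotalVariation

variable {E : Type*} [MeasurableSpace E]

lemma tvDist_nonneg (μ ν : Measure E) : 0 ≤ tvDist μ ν :=
  Real.iSup_nonneg fun _ => abs_nonneg _

lemma tvDist_comm (μ ν : Measure E) : tvDist μ ν = tvDist ν μ := by
  simp only [tvDist, abs_sub_comm]

variable (μ ν : Measure E) [IsProbabilityMeasure μ] [IsProbabilityMeasure ν]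

lemma abs_measureReal_sub_le_one (A : Set E) : |(μ A).toReal - (ν A).toReal| ≤ 1 := by
  have := abs_sub_le_of_le_of_le measureReal_nonneg (measureReal_le_one (μ := μ) (s := A))
    measureReal_nonneg (measureReal_le_one (μ := ν) (s := A))
  rwa [sub_zero] at this

lemma tvDist_le_one : tvDist μ ν ≤ 1 :=
  Real.iSup_le (fun A => abs_measureReal_sub_le_one μ ν A) zero_le_one

variable {μ ν} in
lemma abs_measureReal_sub_le_tvDist {A : Set E} (hA : MeasurableSet A) :
    |(μ A).toReal - (ν A).toReal| ≤ tvDist μ ν :=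
  le_ciSup (f := fun B : {s : Set E // MeasurableSet s} => |(μ B).toReal - (ν B).toReal|)
    ⟨1, by rintro _ ⟨B, rfl⟩; exact abs_measureReal_sub_le_one μ ν B⟩ ⟨A, hA⟩

end TotalVariation

section Integral

variable {E : Type*} [MeasurableSpace E] {f : E → ℝ} {β : ℝ}

lemma integrable_of_nonneg_of_le {μ : Measure E} [IsFiniteMeasure μ] (hf : Measurable f)
    (hf₀ : ∀ x, 0 ≤ f x) (hfβ : ∀ x, f x ≤ β) : Integrable f μ :=
  .of_bound hf.aestronglyMeasurable β <| .of_forall fun x => by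
    rw [Real.norm_of_nonneg (hf₀ x)]; exact hfβ x

lemma integral_sub_integral_le_of_le {μ ν : Measure E} [IsFiniteMeasure μ] (hνμ : ν ≤ μ)
    (hf : Measurable f) (hf₀ : ∀ x, 0 ≤ f x) (hfβ : ∀ x, f x ≤ β) :
    ∫ x, f x ∂μ - ∫ x, f x ∂ν ≤ β * (μ.real Set.univ - ν.real Set.univ) := by
  have : IsFiniteMeasure ν := isFiniteMeasure_of_le μ hνμ
  have hmono : ∫ x, β - f x ∂ν ≤ ∫ x, β - f x ∂μ :=
    integral_mono_measure hνμ (.of_forall fun x => sub_nonneg.2 (hfβ x))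
      ((integrable_const β).sub (integrable_of_nonneg_of_le hf hf₀ hfβ))
  rw [integral_sub (integrable_const β) (integrable_of_nonneg_of_le hf hf₀ hfβ),
    integral_sub (integrable_const β) (integrable_of_nonneg_of_le hf hf₀ hfβ),
    integral_const, integral_const, smul_eq_mul, smul_eq_mul] at hmono
  linarith

variable (μ ν : Measure E) [IsProbabilityMeasure μ] [IsProbabilityMeasure ν]

lemma integral_sub_integral_le_mul_tvDist (hf : Measurable f) (hf₀ : ∀ x, 0 ≤ f x)
    (hfβ : ∀ x, f x ≤ β) : ∫ x, f x ∂μ - ∫ x, f x ∂ν ≤ β * tvDist μ ν := by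
  obtain ⟨x₀⟩ := nonempty_of_isProbabilityMeasure μ
  obtain ⟨S, hS⟩ := exists_isHahnDecomposition ν μ
  have hsplit (ρ : Measure E) [IsProbabilityMeasure ρ] :
      ∫ x, f x ∂ρ = ∫ x in S, f x ∂ρ + ∫ x in Sᶜ, f x ∂ρ :=
    (integral_add_compl hS.measurableSet (integrable_of_nonneg_of_le hf hf₀ hfβ)).symm
  have hS_le : ∫ x in S, f x ∂μ - ∫ x in S, f x ∂ν ≤ β * (μ.real S - ν.real S) := by
    simpa only [measureReal_restrict_apply_univ] using
      integral_sub_integral_le_of_le hS.le_on hf hf₀ hfβ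
  have hSc_le : ∫ x in Sᶜ, f x ∂μ ≤ ∫ x in Sᶜ, f x ∂ν :=
    integral_mono_measure hS.ge_on_compl (.of_forall hf₀) (integrable_of_nonneg_of_le hf hf₀ hfβ)
  have htv : β * (μ.real S - ν.real S) ≤ β * tvDist μ ν :=
    mul_le_mul_of_nonneg_left ((le_abs_self _).trans
      (abs_measureReal_sub_le_tvDist hS.measurableSet)) ((hf₀ x₀).trans (hfβ x₀))
  rw [hsplit μ, hsplit ν]
  linarith

lemma abs_integral_sub_integral_le_mul_tvDist (hf : Measurable f)
    (hosc : ∀ x y, f x - f y ≤ β) : |∫ x, f x ∂μ - ∫ x, f x ∂ν| ≤ β * tvDist μ ν := by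
  have hE : Nonempty E := nonempty_of_isProbabilityMeasure μ
  have hbdd : BddBelow (Set.range f) :=
    ⟨f hE.some - β, by rintro _ ⟨x, rfl⟩; linarith [hosc hE.some x]⟩
  -- shifting `f` by its infimum lands it in `[0, β]` without changing the difference
  set c := ⨅ x, f x
  have hc₀ (x : E) : 0 ≤ f x - c := sub_nonneg.2 (ciInf_le hbdd x)
  have hcβ (x : E) : f x - c ≤ β :=
    sub_le_comm.1 (le_ciInf fun y => sub_le_comm.1 (hosc x y))
  have hf_int (ρ : Measure E) [IsProbabilityMeasure ρ] : Integrable f ρ :=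
    ((integrable_of_nonneg_of_le (hf.sub_const c) hc₀ hcβ).add (integrable_const c)).congr
      (.of_forall fun x => sub_add_cancel (f x) c)
  have one_side (ρ ρ' : Measure E) [IsProbabilityMeasure ρ] [IsProbabilityMeasure ρ'] :
      ∫ x, f x ∂ρ - ∫ x, f x ∂ρ' ≤ β * tvDist ρ ρ' := by
    have := integral_sub_integral_le_mul_tvDist ρ ρ' (hf.sub_const c) hc₀ hcβ
    rwa [integral_sub (hf_int ρ) (integrable_const c),
      integral_sub (hf_int ρ') (integrable_const c), integral_const, integral_const,
      probReal_univ, probReal_univ, sub_sub_sub_cancel_right] at this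
  exact abs_sub_le_iff.2 ⟨one_side μ ν, tvDist_comm μ ν ▸ one_side ν μ⟩

end Integral

section Dobrushin

variable {E F G : Type*} [MeasurableSpace E] [MeasurableSpace F] [MeasurableSpace G]

lemma dobrushin_nonneg (P : Kernel E F) : 0 ≤ dobrushin P :=
  Real.iSup_nonneg fun _ => tvDist_nonneg _ _

lemma Kernel.comp_apply_toReal (P : Kernel E F) (Q : Kernel F G) [IsFiniteKernel Q] (x : E) {A : Set G}
    (hA : MeasurableSet A) : ((Q.comp P) x A).toReal = ∫ y, (Q y A).toReal ∂(P x) := by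
  rw [Kernel.comp_apply' _ _ _ hA, integral_toReal (Q.measurable_coe hA).aemeasurable
    (.of_forall fun _ => measure_lt_top _ _)]

variable (P : Kernel E F) [IsMarkovKernel P]

lemma dobrushin_le_one : dobrushin P ≤ 1 :=
  Real.iSup_le (fun _ => tvDist_le_one _ _) zero_le_one

lemma tvDist_le_dobrushin (x y : E) : tvDist (P x) (P y) ≤ dobrushin P :=
  le_ciSup (f := fun p : E × E => tvDist (P p.1) (P p.2))
    ⟨1, by rintro _ ⟨p, rfl⟩; exact tvDist_le_one _ _⟩ (x, y)

lemma measureReal_sub_le_dobrushin {A : Set F} (hA : MeasurableSet A) (x y : E) :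
    (P x A).toReal - (P y A).toReal ≤ dobrushin P :=
  (le_abs_self _).trans ((abs_measureReal_sub_le_tvDist hA).trans (tvDist_le_dobrushin P x y))

lemma tvDist_comp_le_mul (Q : Kernel F G) [IsMarkovKernel Q] (x y : E) :
    tvDist ((Q.comp P) x) ((Q.comp P) y) ≤ dobrushin Q * tvDist (P x) (P y) := by
  refine Real.iSup_le (fun ⟨A, hA⟩ => ?_)
    (mul_nonneg (dobrushin_nonneg Q) (tvDist_nonneg _ _))
  rw [Kernel.comp_apply_toReal P Q x hA, Kernel.comp_apply_toReal P Q y hA]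
  exact abs_integral_sub_integral_le_mul_tvDist _ _ (Q.measurable_coe hA).ennreal_toReal
    (measureReal_sub_le_dobrushin Q hA)

lemma dobrushin_comp_le_mul (Q : Kernel F G) [IsMarkovKernel Q] :
    dobrushin (Q.comp P) ≤ dobrushin P * dobrushin Q :=
  Real.iSup_le (fun p => (tvDist_comp_le_mul P Q p.1 p.2).trans <| by
      rw [mul_comm]
      exact mul_le_mul_of_nonneg_right (tvDist_le_dobrushin P p.1 p.2) (dobrushin_nonneg Q))
    (mul_nonneg (dobrushin_nonneg P) (dobrushin_nonneg Q))

end Dobrushin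

section Iterate

variable {E : Type*} [MeasurableSpace E] (Q : Kernel E E) [IsMarkovKernel Q]

instance isMarkovKernel_iterKernel : ∀ n, IsMarkovKernel (iterKernel Q n)
  | 0 => inferInstanceAs (IsMarkovKernel Kernel.id)
  | n + 1 =>
    have := isMarkovKernel_iterKernel n
    inferInstanceAs (IsMarkovKernel ((iterKernel Q n).comp Q))

lemma dobrushin_iterKernel_le_pow (n : ℕ) : dobrushin (iterKernel Q n) ≤ dobrushin Q ^ n := by
  induction n with
  | zero => simpa [iterKernel] using dobrushin_le_one (Kernel.id : Kernel E E)
  | succ n ih =>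
    calc dobrushin (iterKernel Q (n + 1)) ≤ dobrushin Q * dobrushin (iterKernel Q n) :=
          dobrushin_comp_le_mul Q (iterKernel Q n)
      _ ≤ dobrushin Q ^ (n + 1) := by
          rw [pow_succ']
          exact mul_le_mul_of_nonneg_left ih (dobrushin_nonneg Q)

end Iterate

theorem dobrushin_comp_le_general
    {E₀ E₁ E₂ E : Type*} [MeasurableSpace E₀] [MeasurableSpace E₁] [MeasurableSpace E₂]
    [MeasurableSpace E]
    (P₁ : Kernel E₀ E₁) [IsMarkovKernel P₁] (P₂ : Kernel E₁ E₂) [IsMarkovKernel P₂]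
    (ε₁ ε₂ : ℝ) (h₁ : dobrushin P₁ ≤ 1 - ε₁) (h₂ : dobrushin P₂ ≤ 1 - ε₂)
    (Q : Kernel E E) [IsMarkovKernel Q]
    (ε : ℝ) (hQ : dobrushin Q ≤ 1 - ε) :
    dobrushin (P₂.comp P₁) ≤ dobrushin P₁ * dobrushin P₂ ∧
      dobrushin P₁ * dobrushin P₂ ≤ (1 - ε₁) * (1 - ε₂) ∧
      ∀ n : ℕ, dobrushin (iterKernel Q n) ≤ (1 - ε) ^ n :=
  ⟨dobrushin_comp_le_mul P₁ P₂,
    mul_le_mul h₁ h₂ (dobrushin_nonneg P₂) ((dobrushin_nonneg P₁).trans h₁),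
    fun n => (dobrushin_iterKernel_le_pow Q n).trans (pow_le_pow_left₀ (dobrushin_nonneg Q) hQ n)⟩

/-- The Dobrushin coefficient is submultiplicative under composition of Markov kernels:
`β(P₁P₂) ≤ β(P₁)·β(P₂) ≤ (1−ε₁)(1−ε₂)`; in particular the `n`-fold composition of a kernel
with coefficient at most `1−ε` has coefficient at most `(1−ε)ⁿ`. -/
theorem dobrushin_comp_le
    {E₀ E₁ E₂ E : Type*} [MeasurableSpace E₀] [MeasurableSpace E₁] [MeasurableSpace E₂]
    [MeasurableSpace E]
    (P₁ : Kernel E₀ E₁) [IsMarkovKernel P₁] (P₂ : Kernel E₁ E₂) [IsMarkovKernel P₂]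
    (ε₁ ε₂ : ℝ) (h₁ : dobrushin P₁ ≤ 1 - ε₁) (h₂ : dobrushin P₂ ≤ 1 - ε₂)
    (hε₁ : ε₁ ∈ Set.Ioo (0 : ℝ) 1) (hε₂ : ε₂ ∈ Set.Ioo (0 : ℝ) 1)
    (Q : Kernel E E) [IsMarkovKernel Q]
    (ε : ℝ) (hε : ε ∈ Set.Ioo (0 : ℝ) 1) (hQ : dobrushin Q ≤ 1 - ε) :
    dobrushin (P₂.comp P₁) ≤ dobrushin P₁ * dobrushin P₂ ∧
      dobrushin P₁ * dobrushin P₂ ≤ (1 - ε₁) * (1 - ε₂) ∧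
      ∀ n : ℕ, dobrushin (iterKernel Q n) ≤ (1 - ε) ^ n :=
  dobrushin_comp_le_general P₁ P₂ ε₁ ε₂ h₁ h₂ Q ε hQ
end
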